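/- arXiv:math/0311502 — 2 statements merged into one kernel-verified Lean document; each statement's English description precedes it below -/
import Mathlib

section
/- In A^∞ the *-operation is continuous and the multiplication is jointly continuous; in other words, A^∞ is a topological *-algebra. -/
noncomputable section

open scoped Topology

section SmoothAlgebra

variable {A B : Type} [NonUnitalCStarAlgebra A] [StarModule ℂ A]
  [NonUnitalRing B] [Module ℂ B] [IsScalarTower ℂ B B] [SMulCommClass ℂ B B]
  [StarRing B] [StarModule ℂ B]

/-- `A^∞` (realized as the image of `ι : B → A`) is closed under the holomorphic functional
calculus after the adjunction of a unit: in the unitization of `A`, whenever an element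
`z·1 + b` of `ℂ·1 + A^∞` is invertible, its inverse again lies in `ℂ·1 + A^∞`.
(By Schweitzer's lemma this inverse-closedness is equivalent to closure under the
holomorphic functional calculus.) -/
def HoloClosed (ι : B →⋆ₙₐ[ℂ] A) : Prop :=
  ∀ (z : ℂ) (b : B) (y : Unitization ℂ A),
    (algebraMap ℂ (Unitization ℂ A) z + Unitization.inr (ι b)) * y = 1 →
    y * (algebraMap ℂ (Unitization ℂ A) z + Unitization.inr (ι b)) = 1 →
    ∃ (w : ℂ) (c : B), y = algebraMap ℂ (Unitization ℂ A) w + Unitization.inr (ι c)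

/-- `A^∞` is closed under the smooth functional calculus: after the adjunction of a unit,
for every self-adjoint element `a` of `ℂ·1 + A^∞` and every `f ∈ C^∞(ℝ)`, the element
`f(a)` (continuous functional calculus) again lies in `ℂ·1 + A^∞`. -/
def SmoothClosed (ι : B →⋆ₙₐ[ℂ] A) : Prop :=
  ∀ (z : ℂ) (b : B),
    IsSelfAdjoint (algebraMap ℂ (Unitization ℂ A) z + Unitization.inr (ι b)) →
    ∀ f : ℝ → ℝ, ContDiff ℝ (⊤ : ℕ∞) f →
      ∃ (w : ℂ) (c : B),
        cfc (p := IsSelfAdjoint) f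
            (algebraMap ℂ (Unitization ℂ A) z + Unitization.inr (ι b)) =
          algebraMap ℂ (Unitization ℂ A) w + Unitization.inr (ι c)

end SmoothAlgebra

section OpenMappingMachinery
open Filter Topology Set Pointwise

section Aux

variable {G : Type*} [AddCommGroup G] [TopologicalSpace G] [IsTopologicalAddGroup G]

lemma mem_add_of_mem_closure {S N : Set G} {x : G} (hx : x ∈ closure S) (hN : N ∈ 𝓝 0) :
    x ∈ S + N := by
  have hcont : ContinuousAt (fun y => x - y) x := (continuous_const.sub continuous_id).continuousAt
  have ht : (fun y => x - y) ⁻¹' N ∈ 𝓝 x := hcont.preimage_mem_nhds (by simpa using hN)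
  obtain ⟨y, hy1, hy2⟩ := mem_closure_iff_nhds.1 hx _ ht
  exact ⟨y, hy2, x - y, hy1, by simp⟩

lemma sub_mem_closure_sub {S : Set G} {a b : G} (ha : a ∈ closure S) (hb : b ∈ closure S) :
    a - b ∈ closure (S - S) := by
  have h1 : (a, b) ∈ closure (S ×ˢ S) := by
    rw [closure_prod_eq]; exact ⟨ha, hb⟩
  have h2 : a - b ∈ (fun p : G × G => p.1 - p.2) '' closure (S ×ˢ S) := ⟨(a, b), h1, rfl⟩
  have h3 := image_closure_subset_closure_image (f := fun p : G × G => p.1 - p.2)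
    (s := S ×ˢ S) (continuous_fst.sub continuous_snd)
  have h4 : (fun p : G × G => p.1 - p.2) '' (S ×ˢ S) = S - S := by
    rw [Set.image_prod fun a b : G => a - b]; exact Set.image2_sub
  rw [h4] at h3
  exact h3 h2

end Aux

section OpenMapping

variable {E F : Type*} [AddCommGroup E] [Module ℝ E] [UniformSpace E] [IsUniformAddGroup E]
  [ContinuousSMul ℝ E]
  [AddCommGroup F] [Module ℝ F] [TopologicalSpace F] [IsTopologicalAddGroup F]
  [ContinuousSMul ℝ F] [BaireSpace F]

lemma stepA (f : E →ₗ[ℝ] F) (hsurj : Function.Surjective f) {U : Set E} (hU : U ∈ 𝓝 0) :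
    closure (f '' U) ∈ 𝓝 (0 : F) := by
  obtain ⟨V, hV, hVU⟩ := exists_nhds_zero_half hU
  set W : Set E := balancedCore ℝ V with hWdef
  have hW : W ∈ 𝓝 0 := balancedCore_mem_nhds_zero hV
  have hWbal : Balanced ℝ W := balancedCore_balanced V
  have hWV : W ⊆ V := balancedCore_subset V
  set C : Set F := closure (f '' W) with hC
  -- the scaled copies of `C` cover `F`
  have hcover : (⋃ n : ℕ, ((n : ℝ) + 1) • C) = univ := by
    refine eq_univ_of_forall fun y => ?_
    obtain ⟨x, rfl⟩ := hsurj y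
    obtain ⟨r, hr⟩ := absorbs_iff_norm.1 ((absorbent_nhds_zero (𝕜 := ℝ) hW) x)
    obtain ⟨n, hn⟩ := exists_nat_ge r
    have hx : x ∈ ((n : ℝ) + 1) • W := by
      refine hr ((n : ℝ) + 1) ?_ (Set.mem_singleton x)
      rw [Real.norm_eq_abs, abs_of_nonneg (by positivity)]
      linarith
    refine mem_iUnion.2 ⟨n, ?_⟩
    obtain ⟨w, hw, rfl⟩ := hx
    exact ⟨f w, subset_closure ⟨w, hw, rfl⟩, (map_smul f _ _).symm⟩
  have hclosed : ∀ n : ℕ, IsClosed (((n : ℝ) + 1) • C) := fun n =>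
    isClosed_closure.smul_of_ne_zero (by positivity)
  obtain ⟨n, x₀, hx₀⟩ := nonempty_interior_of_iUnion_of_closed hclosed hcover
  rw [interior_smul₀ (by positivity : ((n : ℝ) + 1) ≠ 0)] at hx₀
  obtain ⟨z, hz, -⟩ := hx₀
  -- `interior C - z` is an open neighborhood of `0` inside `closure (f '' U)`
  have hTopen : IsOpen ((fun w => w - z) '' interior C) :=
    (Homeomorph.subRight z).isOpenMap _ isOpen_interior
  have hT0 : (0 : F) ∈ (fun w => w - z) '' interior C := ⟨z, hz, sub_self z⟩
  have hTsub : (fun w => w - z) '' interior C ⊆ closure (f '' U) := by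
    rintro - ⟨w, hw, rfl⟩
    have hsub : w - z ∈ closure (f '' W - f '' W) :=
      sub_mem_closure_sub (interior_subset hw) (interior_subset hz)
    refine closure_mono ?_ hsub
    rintro - ⟨-, ⟨a, ha, rfl⟩, -, ⟨b, hb, rfl⟩, rfl⟩
    have hb' : -b ∈ W := by
      have := hWbal (-1) (by norm_num)
      exact this ⟨b, hb, by simp⟩
    exact ⟨a + -b, hVU a (hWV ha) (-b) (hWV hb'), by rw [map_add, map_neg]; abel⟩
  exact mem_nhds_iff.2 ⟨_, hTsub, hTopen, hT0⟩

end OpenMapping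

section OpenMapping2

variable {E F : Type*} [AddCommGroup E] [Module ℝ E] [UniformSpace E] [IsUniformAddGroup E]
  [ContinuousSMul ℝ E] [CompleteSpace E] [(uniformity E).IsCountablyGenerated]
  [AddCommGroup F] [Module ℝ F] [TopologicalSpace F] [IsTopologicalAddGroup F]
  [ContinuousSMul ℝ F] [BaireSpace F] [T2Space F] [RegularSpace F]

lemma stepB (f : E →ₗ[ℝ] F) (hf : Continuous f) (hsurj : Function.Surjective f)
    {W : Set E} (hW : W ∈ 𝓝 0) : f '' W ∈ 𝓝 (0 : F) := by
  -- a countable antitone basis of `𝓝 0` in `E`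
  haveI : (𝓝 (0 : E)).IsCountablyGenerated := by
    haveI := UniformSpace.pseudoMetrizableSpace (X := E)
    infer_instance
  obtain ⟨u, hu⟩ := (𝓝 (0 : E)).exists_antitone_basis
  -- a "halving" function on neighborhoods of 0
  have hhalf : ∀ S : Set E, S ∈ 𝓝 0 → ∃ T, T ∈ 𝓝 (0 : E) ∧ T + T ⊆ S := by
    intro S hS
    obtain ⟨T, hT, hTS⟩ := exists_nhds_zero_half hS
    exact ⟨T, hT, by rintro - ⟨a, ha, b, hb, rfl⟩; exact hTS a ha b hb⟩
  obtain ⟨Q, hQ, hQW⟩ := hhalf W hW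
  obtain ⟨R, hR, hRQ⟩ := hhalf Q hQ
  classical
  choose g hg1 hg2 using hhalf
  set G : Set E → Set E := fun S => if h : S ∈ 𝓝 0 then g S h else univ with hGdef
  have hG1 : ∀ S, S ∈ 𝓝 (0 : E) → G S ∈ 𝓝 0 := fun S hS => by
    simp only [hGdef, dif_pos hS]; exact hg1 S hS
  have hG2 : ∀ S, (hS : S ∈ 𝓝 (0 : E)) → G S + G S ⊆ S := fun S hS => by
    simp only [hGdef, dif_pos hS]; exact hg2 S hS
  -- the recursive sequence of neighborhoods
  set V : ℕ → Set E := fun n => Nat.rec (G R) (fun n Vn => G (Vn ∩ u (n + 1))) n with hVdef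
  have hVmem : ∀ n, V n ∈ 𝓝 (0 : E) := by
    intro n
    induction n with
    | zero => exact hG1 R hR
    | succ n ih => exact hG1 _ (Filter.inter_mem ih (hu.1.mem_of_mem trivial))
  have hV0 : V 0 + V 0 ⊆ R := hG2 R hR
  have hVsucc : ∀ n, V (n + 1) + V (n + 1) ⊆ V n ∩ u (n + 1) := fun n =>
    hG2 _ (Filter.inter_mem (hVmem n) (hu.1.mem_of_mem trivial))
  have hzero : ∀ n, (0 : E) ∈ V n := fun n => mem_of_mem_nhds (hVmem n)
  have hVsub : ∀ n, V (n + 1) ⊆ V n ∩ u (n + 1) := fun n x hx =>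
    hVsucc n ⟨x, hx, 0, hzero (n + 1), add_zero x⟩
  have hVmono : Antitone V := antitone_nat_of_succ_le fun n => (hVsub n).trans inter_subset_left
  have hVu : ∀ n, V (n + 1) ⊆ u (n + 1) := fun n => (hVsub n).trans inter_subset_right
  -- the key inductive step, from Baire (`stepA`)
  have key : ∀ n (z : F), z ∈ closure (f '' V n) →
      ∃ x ∈ V n, z - f x ∈ closure (f '' V (n + 1)) := by
    intro n z hz
    have hD : closure (f '' V (n + 1)) ∈ 𝓝 (0 : F) := stepA f hsurj (hVmem (n + 1))
    have ht : (fun w => z - w) '' closure (f '' V (n + 1)) ∈ 𝓝 z := by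
      have h := Filter.image_mem_map (m := fun w => z - w) hD
      have hmap : Filter.map (fun w => z - w) (𝓝 (0 : F)) = 𝓝 z := by
        have h2 := (Homeomorph.subLeft z).map_nhds_eq 0
        rw [show (Homeomorph.subLeft z) 0 = z from by simp] at h2
        exact h2
      rwa [hmap] at h
    obtain ⟨p, hp1, hp2⟩ := mem_closure_iff_nhds.1 hz _ ht
    obtain ⟨x, hx, rfl⟩ := hp2
    obtain ⟨d, hd, hzd⟩ := hp1
    exact ⟨x, hx, by rw [← hzd]; simpa using hd⟩
  choose! xsel hx1 hx2 using key
  -- main claim: `closure (f '' V 0) ⊆ f '' W`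
  have main : closure (f '' V 0) ⊆ f '' W := by
    intro y hy
    set z : ℕ → F := fun n => Nat.rec y (fun n zn => zn - f (xsel n zn)) n with hzdef
    have hzsucc : ∀ n, z (n + 1) = z n - f (xsel n (z n)) := fun n => rfl
    have hzmem : ∀ n, z n ∈ closure (f '' V n) := by
      intro n
      induction n with
      | zero => exact hy
      | succ n ih => exact hx2 n (z n) ih
    set x : ℕ → E := fun n => xsel n (z n) with hxdef
    have hxV : ∀ n, x n ∈ V n := fun n => hx1 n (z n) (hzmem n)
    set s : ℕ → E := fun m => ∑ i ∈ Finset.range m, x i with hsdef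
    have htail : ∀ k n, (∑ i ∈ Finset.Ico (n + 1) (n + 1 + k), x i) ∈ V n := by
      intro k
      induction k with
      | zero => intro n; simpa using hzero n
      | succ k ih =>
        intro n
        have hlt : n + 1 < n + 1 + (k + 1) := by omega
        rw [Finset.sum_eq_sum_Ico_succ_bot hlt]
        have h2 : (∑ i ∈ Finset.Ico (n + 1 + 1) (n + 1 + (k + 1)), x i) ∈ V (n + 1) := by
          rw [show n + 1 + (k + 1) = n + 1 + 1 + k from by omega]
          exact ih (n + 1)
        exact ((hVsucc n).trans inter_subset_left) (Set.add_mem_add (hxV (n + 1)) h2)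
    have hdiff : ∀ m n, n ≤ m → s m - s n = ∑ i ∈ Finset.Ico n m, x i := fun m n h =>
      (Finset.sum_Ico_eq_sub x h).symm
    have hVS : ∀ {m n}, 1 ≤ n → n ≤ m → s m - s n ∈ V (n - 1) := by
      intro m n h1 h2
      rw [hdiff m n h2, show n = (n - 1) + 1 from by omega,
        show m = (n - 1) + 1 + (m - n) from by omega]
      exact htail (m - n) (n - 1)
    have hcauchy : CauchySeq s := by
      rw [cauchySeq_iff]
      intro U' hU'
      rw [uniformity_eq_comap_nhds_zero E, Filter.mem_comap] at hU'
      obtain ⟨S, hS, hSU⟩ := hU'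
      have hS' : S ∩ (fun w => -w) ⁻¹' S ∈ 𝓝 (0 : E) :=
        Filter.inter_mem hS (continuous_neg.continuousAt.preimage_mem_nhds (by simpa using hS))
      obtain ⟨j, -, hj⟩ := hu.1.mem_iff.1 hS'
      refine ⟨j + 2, fun k hk l hl => ?_⟩
      apply hSU
      have hVjS : V (j + 1) ⊆ S ∩ (fun w => -w) ⁻¹' S :=
        (hVu j).trans ((hu.antitone (Nat.le_succ j)).trans hj)
      rcases le_total k l with h | h
      · have h1 : s l - s k ∈ V (k - 1) := hVS (m := l) (n := k) (by omega) h
        have h2 : V (k - 1) ⊆ V (j + 1) := hVmono (show j + 1 ≤ k - 1 from by omega)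
        exact Set.mem_preimage.2 ((hVjS (h2 h1)).1)
      · have h1 : s k - s l ∈ V (l - 1) := hVS (m := k) (n := l) (by omega) h
        have h2 : V (l - 1) ⊆ V (j + 1) := hVmono (show j + 1 ≤ l - 1 from by omega)
        have h3 := (hVjS (h2 h1)).2
        simpa [Set.mem_preimage] using h3
    obtain ⟨xlim, hxlim⟩ := cauchySeq_tendsto_of_complete hcauchy
    have hsR : ∀ m, s m ∈ R := by
      intro m
      rcases Nat.eq_zero_or_pos m with rfl | hm
      · have h0 : s 0 = 0 := by simp [hsdef]
        rw [h0]
        exact mem_of_mem_nhds hR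
      · have hsplit : s m = x 0 + ∑ i ∈ Finset.Ico 1 m, x i := by
          rw [hsdef]
          simp only []
          rw [Finset.range_eq_Ico, Finset.sum_eq_sum_Ico_succ_bot hm]
        rw [hsplit]
        have h2 : (∑ i ∈ Finset.Ico 1 m, x i) ∈ V 0 := by
          have h3 := htail (m - 1) 0
          rw [show 0 + 1 + (m - 1) = m from by omega, show (0 : ℕ) + 1 = 1 from rfl] at h3
          exact h3
        exact hV0 (Set.add_mem_add (hxV 0) h2)
    have hxW : xlim ∈ W := by
      have h1 : xlim ∈ closure R := mem_closure_of_tendsto hxlim (Filter.Eventually.of_forall hsR)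
      have h2 : xlim ∈ R + Q := mem_add_of_mem_closure h1 hQ
      obtain ⟨a, ha, b, hb, rfl⟩ := h2
      have haQ : a ∈ Q := hRQ ⟨a, ha, 0, mem_of_mem_nhds hR, add_zero a⟩
      exact hQW ⟨a, haQ, b, hb, rfl⟩
    have hzs : ∀ n, z n = y - f (s n) := by
      intro n
      induction n with
      | zero =>
        have h0 : s 0 = 0 := by simp [hsdef]
        rw [h0, map_zero, sub_zero]
        rfl
      | succ n ih =>
        have hss : s (n + 1) = s n + x n := by simp [hsdef, Finset.sum_range_succ]
        rw [hzsucc, ih, hss, map_add]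
        simp only [hxdef]
        rw [sub_sub, ← ih]
    have hz0' : Filter.Tendsto z Filter.atTop (𝓝 (0 : F)) := by
      rw [Filter.tendsto_def]
      intro N hN
      obtain ⟨N', ⟨hN'mem, hN'closed⟩, hN'N⟩ := (closed_nhds_basis (0 : F)).mem_iff.1 hN
      have hfN : f ⁻¹' N' ∈ 𝓝 (0 : E) :=
        hf.continuousAt.preimage_mem_nhds (by simpa using hN'mem)
      obtain ⟨j, -, hj⟩ := hu.1.mem_iff.1 hfN
      have : ∀ n ≥ j + 1, z n ∈ N := by
        intro n hn
        have hVn : V n ⊆ f ⁻¹' N' := by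
          rw [show n = (n - 1) + 1 from by omega]
          exact (hVu (n - 1)).trans ((hu.antitone (by omega)).trans hj)
        have himg : f '' V n ⊆ N' := by
          rintro - ⟨a, ha, rfl⟩; exact hVn ha
        have := (hN'closed.closure_subset_iff.2 himg) (hzmem n)
        exact hN'N this
      exact Filter.mem_of_superset (Filter.mem_atTop (j + 1)) this
    have hfx : Filter.Tendsto (fun n => y - f (s n)) Filter.atTop (𝓝 (y - f xlim)) :=
      tendsto_const_nhds.sub ((hf.tendsto xlim).comp hxlim)
    have hz0'' : Filter.Tendsto (fun n => y - f (s n)) Filter.atTop (𝓝 (0 : F)) := by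
      have : z = fun n => y - f (s n) := funext hzs
      rwa [this] at hz0'
    have heq : y - f xlim = 0 := tendsto_nhds_unique hfx hz0''
    exact ⟨xlim, hxW, (sub_eq_zero.1 heq).symm⟩
  exact Filter.mem_of_superset (stepA f hsurj (hVmem 0)) main

end OpenMapping2

section OpenMapping3

variable {E F : Type*} [AddCommGroup E] [Module ℝ E] [UniformSpace E] [IsUniformAddGroup E]
  [ContinuousSMul ℝ E] [CompleteSpace E] [(uniformity E).IsCountablyGenerated]
  [AddCommGroup F] [Module ℝ F] [TopologicalSpace F] [IsTopologicalAddGroup F]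
  [ContinuousSMul ℝ F] [BaireSpace F] [T2Space F] [RegularSpace F]

lemma myIsOpenMap (f : E →ₗ[ℝ] F) (hf : Continuous f) (hsurj : Function.Surjective f) :
    IsOpenMap f := by
  apply IsOpenMap.of_nhds_le
  intro a
  have h0 : 𝓝 (0 : F) ≤ Filter.map f (𝓝 (0 : E)) := by
    intro S hS
    rw [Filter.mem_map] at hS
    exact Filter.mem_of_superset (stepB f hf hsurj hS) (Set.image_preimage_subset f S)
  calc 𝓝 (f a) = Filter.map (f a + ·) (𝓝 0) := (map_add_left_nhds_zero (f a)).symm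
    _ ≤ Filter.map (f a + ·) (Filter.map f (𝓝 0)) := Filter.map_mono h0
    _ = Filter.map (fun x => f (a + x)) (𝓝 0) := by
        rw [Filter.map_map]; congr 1; funext x; simp [map_add]
    _ = Filter.map f (Filter.map (a + ·) (𝓝 0)) := by rw [Filter.map_map]; rfl
    _ = Filter.map f (𝓝 a) := by rw [map_add_left_nhds_zero a]

end OpenMapping3

section ClosedGraph

variable {H : Type*} [AddCommGroup H] [Module ℝ H] [UniformSpace H] [IsUniformAddGroup H]
  [ContinuousSMul ℝ H] [CompleteSpace H] [TopologicalSpace.MetrizableSpace H]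

lemma uniformity_countably_generated_of_metrizable {X : Type*} [AddCommGroup X] [UniformSpace X]
    [IsUniformAddGroup X] [FirstCountableTopology X] :
    (uniformity X).IsCountablyGenerated := by
  rw [uniformity_eq_comap_nhds_zero X]
  exact Filter.comap.isCountablyGenerated _ _

lemma continuous_of_closedGraph (f : H →ₗ[ℝ] H) (hg : IsClosed (f.graph : Set (H × H))) :
    Continuous f := by
  haveI hcg : (uniformity H).IsCountablyGenerated :=
    uniformity_countably_generated_of_metrizable
  haveI : BaireSpace H := inferInstance
  set Γ := f.graph with hΓdef
  haveI : IsUniformAddGroup Γ := by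
    have : IsUniformInducing (Subtype.val : Γ → H × H) := ⟨rfl⟩
    exact this.isUniformAddGroup (AddSubmonoidClass.subtype Γ)
  haveI : CompleteSpace Γ := hg.completeSpace_coe
  haveI : (uniformity (H × H)).IsCountablyGenerated :=
    uniformity_countably_generated_of_metrizable
  haveI : (uniformity Γ).IsCountablyGenerated := by
    rw [uniformity_subtype]
    exact Filter.comap.isCountablyGenerated _ _
  set e : Γ →ₗ[ℝ] H := (LinearMap.fst ℝ H H).comp Γ.subtype with hedef
  have hecont : Continuous e := continuous_fst.comp continuous_subtype_val
  have hesurj : Function.Surjective e := fun a =>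
    ⟨⟨(a, f a), f.mem_graph_iff (a, f a) |>.2 rfl⟩, rfl⟩
  have hopen : IsOpenMap e := myIsOpenMap e hecont hesurj
  rw [continuous_def]
  intro S hS
  have himg : f ⁻¹' S = e '' {p : Γ | (p : H × H).2 ∈ S} := by
    ext a
    constructor
    · intro ha
      exact ⟨⟨(a, f a), f.mem_graph_iff (a, f a) |>.2 rfl⟩, ha, rfl⟩
    · rintro ⟨⟨⟨a', b'⟩, hab⟩, hmem, rfl⟩
      have : b' = f a' := (f.mem_graph_iff (a', b')).1 hab
      simpa [hedef, this] using hmem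
  rw [himg]
  exact hopen _ (((continuous_snd.comp continuous_subtype_val).isOpen_preimage) S hS)

end ClosedGraph

section Main

theorem continuous_star_and_continuous_mul'
    {A B : Type} [NonUnitalCStarAlgebra A] [StarModule ℂ A]
    [NonUnitalRing B] [Module ℂ B] [IsScalarTower ℂ B B] [SMulCommClass ℂ B B]
    [StarRing B] [StarModule ℂ B]
    [UniformSpace B] [IsUniformAddGroup B] [CompleteSpace B]
    [TopologicalSpace.MetrizableSpace B] [ContinuousSMul ℂ B] [LocallyConvexSpace ℝ B]
    (ι : B →⋆ₙₐ[ℂ] A) (hinj : Function.Injective ι)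
    (hcont : Continuous ι) :
    Continuous (star : B → B) ∧ Continuous (fun p : B × B => p.1 * p.2) := by
  haveI : ContinuousSMul ℝ B := by
    constructor
    have heq : (fun p : ℝ × B => p.1 • p.2) = fun p : ℝ × B => ((p.1 : ℂ)) • p.2 := by
      funext p
      rw [← smul_one_smul ℂ p.1 p.2]
      norm_num
    rw [heq]
    exact ((Complex.continuous_ofReal.comp continuous_fst).smul continuous_snd)
  -- closedness of graphs, via the continuous injection `ι`
  have graphClosed : ∀ (f : B →ₗ[ℝ] B) (Fm : A → A), Continuous Fm →
      (∀ x, ι (f x) = Fm (ι x)) → IsClosed (f.graph : Set (B × B)) := by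
    intro f Fm hFm hcomm
    have hset : (f.graph : Set (B × B)) = {p : B × B | ι p.2 = Fm (ι p.1)} := by
      ext p
      simp only [SetLike.mem_coe, LinearMap.mem_graph_iff, Set.mem_setOf_eq]
      constructor
      · intro h; rw [h, hcomm]
      · intro h; exact hinj (by rw [hcomm]; exact h)
    rw [hset]
    exact isClosed_eq (hcont.comp continuous_snd) (hFm.comp (hcont.comp continuous_fst))
  -- the star operation as an `ℝ`-linear map
  set st : B →ₗ[ℝ] B :=
    { toFun := star
      map_add' := star_add
      map_smul' := fun r x => by
        simp only [RingHom.id_apply]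
        rw [← Complex.coe_smul, ← Complex.coe_smul, star_smul, Complex.star_def,
          Complex.conj_ofReal] } with hstdef
  have hstar : Continuous (star : B → B) := by
    have h := continuous_of_closedGraph st
      (graphClosed st (star : A → A) continuous_star (fun x => map_star ι x))
    exact h
  -- separate continuity of multiplication
  have hmulright : ∀ b : B, Continuous (fun x : B => x * b) := by
    intro b
    have h := continuous_of_closedGraph ((LinearMap.mulRight ℂ b).restrictScalars ℝ)
      (graphClosed _ (fun a => a * ι b) (continuous_mul_right (ι b))
        (fun x => by simp [map_mul]))
    exact h
  have hmulleft : ∀ a : B, Continuous (fun x : B => a * x) := by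
    intro a
    have h := continuous_of_closedGraph ((LinearMap.mulLeft ℂ a).restrictScalars ℝ)
      (graphClosed _ (fun z => ι a * z) (continuous_mul_left (ι a))
        (fun x => by simp [map_mul]))
    exact h
  refine ⟨hstar, ?_⟩
  -- joint continuity via Banach–Steinhaus
  haveI : (uniformity B).IsCountablyGenerated := uniformity_countably_generated_of_metrizable
  haveI : BaireSpace B := inferInstance
  have hq : WithSeminorms (gaugeSeminormFamily ℝ B) := with_gaugeSeminormFamily
  rw [continuous_iff_seqContinuous]
  intro x q hx
  have h1 : Filter.Tendsto (fun n => (x n).1) Filter.atTop (𝓝 q.1) :=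
    (continuous_fst.tendsto q).comp hx
  have h2 : Filter.Tendsto (fun n => (x n).2) Filter.atTop (𝓝 q.2) :=
    (continuous_snd.tendsto q).comp hx
  set u : ℕ → B := fun n => (x n).1 - q.1 with hudef
  set v : ℕ → B := fun n => (x n).2 - q.2 with hvdef
  have hu0 : Filter.Tendsto u Filter.atTop (𝓝 0) := by
    simpa using h1.sub (tendsto_const_nhds (x := q.1))
  have hv0 : Filter.Tendsto v Filter.atTop (𝓝 0) := by
    simpa using h2.sub (tendsto_const_nhds (x := q.2))
  set T : ℕ → B →L[ℝ] B := fun n =>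
    { toLinearMap := (LinearMap.mulLeft ℂ (u n)).restrictScalars ℝ
      cont := hmulleft (u n) } with hTdef
  have hpt : ∀ z : B, Filter.Tendsto (fun n => u n * z) Filter.atTop (𝓝 0) := by
    intro z
    have := ((hmulright z).tendsto 0).comp hu0
    simpa [Function.comp_def] using this
  have hbdd : ∀ (k) (z : B), BddAbove (Set.range fun n => gaugeSeminormFamily ℝ B k (T n z)) := by
    intro k z
    have hcs := (hq.continuous_seminorm k).tendsto 0
    have := hcs.comp (hpt z)
    exact this.bddAbove_range
  have hequi : UniformEquicontinuous ((↑) ∘ T) := hq.banach_steinhaus hbdd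
  have hterm1 : Filter.Tendsto (fun n => u n * v n) Filter.atTop (𝓝 0) := by
    have hec : EquicontinuousAt (DFunLike.coe ∘ T) 0 :=
      hequi.equicontinuous 0
    rw [Filter.tendsto_def]
    intro S hS
    have hU : {p : B × B | p.2 - p.1 ∈ S} ∈ uniformity B := by
      rw [uniformity_eq_comap_nhds_zero B]
      exact Filter.preimage_mem_comap hS
    have hV := hec _ hU
    have hev := hv0.eventually hV
    refine Filter.mem_of_superset hev ?_
    intro n hn
    have := hn n
    simp only [Function.comp_apply, Set.mem_setOf_eq, map_zero, sub_zero] at this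
    exact this
  have hterm2 : Filter.Tendsto (fun n => u n * q.2) Filter.atTop (𝓝 0) := hpt q.2
  have hterm3 : Filter.Tendsto (fun n => q.1 * v n) Filter.atTop (𝓝 0) := by
    have := ((hmulleft q.1).tendsto 0).comp hv0
    simpa [Function.comp_def] using this
  have hrepr : ∀ n, (x n).1 * (x n).2 = u n * v n + u n * q.2 + q.1 * v n + q.1 * q.2 := by
    intro n
    simp only [hudef, hvdef]
    rw [sub_mul, mul_sub, mul_sub, sub_mul]
    abel
  have hconv : Filter.Tendsto (fun n => (x n).1 * (x n).2) Filter.atTop (𝓝 (q.1 * q.2)) := by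
    have h := ((hterm1.add hterm2).add hterm3).add (tendsto_const_nhds (x := q.1 * q.2))
    simp only [zero_add, add_zero] at h
    have heq : (fun n => (x n).1 * (x n).2)
        = fun n => u n * v n + u n * q.2 + q.1 * v n + q.1 * q.2 := funext hrepr
    rw [heq]
    exact h
  exact hconv

end Main

end OpenMappingMachinery

/-- **Proposition.** In `A^∞` the `*`-operation is continuous and the multiplication is
jointly continuous; in other words, `A^∞` is a topological `*`-algebra. Here `A^∞` is a
dense sub-*-algebra of the C*-algebra `A`, closed under the holomorphic functional calculus
(after the adjunction of a unit), realized as an abstract Fréchet space `B` with a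
continuous injective dense-range *-homomorphism `ι : B → A`. -/
theorem continuous_star_and_continuous_mul
    {A B : Type} [NonUnitalCStarAlgebra A] [StarModule ℂ A]
    [NonUnitalRing B] [Module ℂ B] [IsScalarTower ℂ B B] [SMulCommClass ℂ B B]
    [StarRing B] [StarModule ℂ B]
    [UniformSpace B] [IsUniformAddGroup B] [CompleteSpace B]
    [TopologicalSpace.MetrizableSpace B] [ContinuousSMul ℂ B] [LocallyConvexSpace ℝ B]
    (ι : B →⋆ₙₐ[ℂ] A) (hinj : Function.Injective ι) (hdense : DenseRange ι)
    (hcont : Continuous ι) (hhfc : HoloClosed ι) :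
    Continuous (star : B → B) ∧ Continuous (fun p : B × B => p.1 * p.2) :=
  continuous_star_and_continuous_mul' ι hinj hcont
end
end

section
/- Let 𝒜 be a unital ℂ-algebra, E a finitely generated projective right 𝒜-module, and ℬ = End(E_𝒜). If δ ∈ Der(𝒜) is an inner derivation and the pair (δ', δ) ∈ Der(ℬ) × Der(𝒜) is compatible, then δ' is an inner derivation of ℬ. -/
/-!
The inner derivation `a ↦ a₀ a - a a₀` of `𝒜` has the connection `∇₀ f = - f a₀` on `E`. Two
connections for the same derivation differ by an `𝒜`-linear map, so `T = ∇ - ∇₀` lies in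
`ℬ = End(E_𝒜)`. Since right multiplication by `a₀` commutes with every `b ∈ ℬ`, the Leibniz rule
`∇ (b f) = b (∇ f) + δ'(b) f` becomes `δ'(b) = T b - b T`.
-/

open MulOpposite

namespace RightConnection

variable {𝒜 E : Type*} [Ring 𝒜] [AddCommGroup E] [Module 𝒜ᵐᵒᵖ E]

theorem op_commutator_smul (a₀ a : 𝒜) (f : E) :
    op (a₀ * a - a * a₀) • f = op a • op a₀ • f - op a₀ • op a • f := by
  rw [op_sub, sub_smul, op_mul, op_mul, mul_smul, mul_smul]

/-- `∇ - ∇₀`, where `∇₀ f = - f a₀` is the connection of the inner derivation `[a₀, ·]`. -/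
def subInner (nabla : E →+ E) (a₀ : 𝒜)
    (hnabla : ∀ (f : E) (a : 𝒜), nabla (op a • f) = op a • nabla f + op (a₀ * a - a * a₀) • f) :
    Module.End 𝒜ᵐᵒᵖ E where
  toFun f := nabla f + op a₀ • f
  map_add' f g := by
    rw [map_add, smul_add]
    abel
  map_smul' := by
    rintro ⟨a⟩ f
    change nabla (op a • f) + op a₀ • op a • f = op a • (nabla f + op a₀ • f)
    rw [hnabla, op_commutator_smul, smul_add]
    abel

theorem eq_commutator_subInner (nabla : E →+ E) (a₀ : 𝒜)
    (hnabla : ∀ (f : E) (a : 𝒜), nabla (op a • f) = op a • nabla f + op (a₀ * a - a * a₀) • f)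
    (D : Module.End 𝒜ᵐᵒᵖ E → Module.End 𝒜ᵐᵒᵖ E)
    (hD : ∀ (b : Module.End 𝒜ᵐᵒᵖ E) (f : E), nabla (b f) = b (nabla f) + D b f)
    (b : Module.End 𝒜ᵐᵒᵖ E) :
    D b = subInner nabla a₀ hnabla * b - b * subInner nabla a₀ hnabla := by
  ext f
  change D b f = (nabla (b f) + op a₀ • b f) - b (nabla f + op a₀ • f)
  rw [hD, map_add, map_smul]
  abel

end RightConnection

open RightConnection in
theorem inner_of_compatible_inner_general
    (𝒜 : Type) [Ring 𝒜] [Algebra ℂ 𝒜]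
    (E : Type) [AddCommGroup E] [Module 𝒜ᵐᵒᵖ E] [Module ℂ E]
    [SMulCommClass 𝒜ᵐᵒᵖ ℂ E]
    (δ : 𝒜 →ₗ[ℂ] 𝒜)
    (hδinner : ∃ a₀ : 𝒜, ∀ a : 𝒜, δ a = a₀ * a - a * a₀)
    (δ' : Module.End 𝒜ᵐᵒᵖ E →ₗ[ℂ] Module.End 𝒜ᵐᵒᵖ E)
    (hcompat : ∃ del : E →ₗ[ℂ] E,
      (∀ (f : E) (a : 𝒜),
        del (MulOpposite.op a • f) = MulOpposite.op a • del f + MulOpposite.op (δ a) • f) ∧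
      (∀ (b : Module.End 𝒜ᵐᵒᵖ E) (f : E), del (b f) = b (del f) + (δ' b) f)) :
    ∃ T : Module.End 𝒜ᵐᵒᵖ E, ∀ b : Module.End 𝒜ᵐᵒᵖ E, δ' b = T * b - b * T := by
  obtain ⟨a₀, ha₀⟩ := hδinner
  obtain ⟨del, hdel𝒜, hdelℬ⟩ := hcompat
  have hconn : ∀ (f : E) (a : 𝒜),
      del.toAddMonoidHom (op a • f) = op a • del f + op (a₀ * a - a * a₀) • f := fun f a => by
    rw [← ha₀]
    exact hdel𝒜 f a
  exact ⟨subInner del.toAddMonoidHom a₀ hconn,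
    eq_commutator_subInner del.toAddMonoidHom a₀ hconn (⇑δ') hdelℬ⟩

/-- **Lemma.** Let `𝒜` be a unital ℂ-algebra, `E` a finitely generated projective right
`𝒜`-module (a left `𝒜ᵐᵒᵖ`-module), and `ℬ = End(E_𝒜)`. If `δ` is an inner derivation of
`𝒜` and the pair `(δ', δ) ∈ Der(ℬ) × Der(𝒜)` is compatible — i.e. some ℂ-linear map
`∇ : E → E` is simultaneously a connection for `(E_𝒜, δ)` and for `(_ℬE, δ')` — then
`δ'` is an inner derivation of `ℬ`. -/
theorem inner_of_compatible_inner
    (𝒜 : Type) [Ring 𝒜] [Algebra ℂ 𝒜]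
    (E : Type) [AddCommGroup E] [Module 𝒜ᵐᵒᵖ E] [Module ℂ E]
    [SMulCommClass ℂ 𝒜ᵐᵒᵖ E] [SMulCommClass 𝒜ᵐᵒᵖ ℂ E]
    (hfin : Module.Finite 𝒜ᵐᵒᵖ E) (hproj : Module.Projective 𝒜ᵐᵒᵖ E)
    (δ : 𝒜 →ₗ[ℂ] 𝒜) (hδder : ∀ a b : 𝒜, δ (a * b) = δ a * b + a * δ b)
    (hδinner : ∃ a₀ : 𝒜, ∀ a : 𝒜, δ a = a₀ * a - a * a₀)
    (δ' : Module.End 𝒜ᵐᵒᵖ E →ₗ[ℂ] Module.End 𝒜ᵐᵒᵖ E)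
    (hδ'der : ∀ b₁ b₂ : Module.End 𝒜ᵐᵒᵖ E, δ' (b₁ * b₂) = δ' b₁ * b₂ + b₁ * δ' b₂)
    (hcompat : ∃ del : E →ₗ[ℂ] E,
      (∀ (f : E) (a : 𝒜),
        del (MulOpposite.op a • f) = MulOpposite.op a • del f + MulOpposite.op (δ a) • f) ∧
      (∀ (b : Module.End 𝒜ᵐᵒᵖ E) (f : E), del (b f) = b (del f) + (δ' b) f)) :
    ∃ T : Module.End 𝒜ᵐᵒᵖ E, ∀ b : Module.End 𝒜ᵐᵒᵖ E, δ' b = T * b - b * T :=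
  inner_of_compatible_inner_general 𝒜 E δ hδinner δ' hcompat
end
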